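/- arXiv:1912.12605 — 2 statements merged into one kernel-verified Lean document; each statement's English description precedes it below -/
import Mathlib

section
/- Let G = (V,E) be a finite simple graph with maximum degree at most 2, and let n ≥ 1. Let A be an independent set in G of size at most n − 1 such that A is contained in the union of all connected components of G that are paths. Then C(lk(I_n(G), A)) ≤ 2(n − 1) − |A|. -/
namespace PaperKL

open Finset

variable {V : Type*}

section Complexes
variable [DecidableEq V]

/-- A (finite) abstract simplicial complex: a family of finite sets closed under
taking subsets. -/
def IsSimplicialComplex (X : Finset (Finset V)) : Prop :=
  ∀ σ ∈ X, ∀ τ ⊆ σ, τ ∈ X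

/-- `σ` is a free face of `X`, with `τ` the unique maximal face of `X` containing it:
equivalently, every face of `X` containing `σ` is contained in `τ`. -/
def IsFreeFace (X : Finset (Finset V)) (σ τ : Finset V) : Prop :=
  σ ∈ X ∧ τ ∈ X ∧ σ ⊆ τ ∧ ∀ η ∈ X, σ ⊆ η → η ⊆ τ

/-- `Y` is obtained from `X` by an elementary `d`-collapse. -/
def ElemCollapse (d : ℕ) (X Y : Finset (Finset V)) : Prop :=
  ∃ σ τ : Finset V, IsFreeFace X σ τ ∧ σ.card ≤ d ∧
    Y = X.filter fun η => ¬(σ ⊆ η ∧ η ⊆ τ)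

/-- `X` is `d`-collapsible: some sequence of elementary `d`-collapses reduces `X`
to the void complex `∅`. -/
def Collapsible (d : ℕ) (X : Finset (Finset V)) : Prop :=
  Relation.ReflTransGen (ElemCollapse d) X ∅

/-- The collapsibility number `C(X)`: the minimum `d` such that `X` is `d`-collapsible. -/
noncomputable def collapseNum (X : Finset (Finset V)) : ℕ :=
  sInf {d | Collapsible d X}

/-- The link `lk(X, τ) = {η ∈ X : η ∩ τ = ∅, η ∪ τ ∈ X}`. -/
def link (X : Finset (Finset V)) (τ : Finset V) : Finset (Finset V) :=
  X.filter fun η => η ∩ τ = ∅ ∧ η ∪ τ ∈ X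

/-- Deletion of a vertex: `X \ v`. -/
def deleteVert (X : Finset (Finset V)) (v : V) : Finset (Finset V) :=
  X.filter fun σ => v ∉ σ

/-- The induced subcomplex on the complement of `S`: `X[V \ S]`. -/
def deleteSet (X : Finset (Finset V)) (S : Finset V) : Finset (Finset V) :=
  X.filter fun σ => σ ∩ S = ∅

/-- The vertex set of a complex: the union of its faces. -/
def vertexSet (X : Finset (Finset V)) : Finset V := X.sup id

/-- The join `X ∗ Y = {σ ∪ τ : σ ∈ X, τ ∈ Y}`. -/
def joinSC (X Y : Finset (Finset V)) : Finset (Finset V) :=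
  (X ×ˢ Y).image fun p => p.1 ∪ p.2

/-- `τ` is a maximal face of `X`. -/
def IsMaximalFace (X : Finset (Finset V)) (τ : Finset V) : Prop :=
  τ ∈ X ∧ ∀ η ∈ X, τ ⊆ η → η = τ

/-- `X` is a cone over `v`: every maximal face of `X` contains `v`. -/
def IsConeOver (X : Finset (Finset V)) (v : V) : Prop :=
  ∀ τ, IsMaximalFace X τ → v ∈ τ

/-- A missing face of `X`: a subset of the vertex set which is not a face,
all of whose proper subsets are faces. -/
def IsMissingFace (X : Finset (Finset V)) (τ : Finset V) : Prop :=
  τ ⊆ vertexSet X ∧ τ ∉ X ∧ ∀ σ ⊂ τ, σ ∈ X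

end Complexes

/-- A finset is an independent set in the graph `G`. -/
def IsIndepSet (G : SimpleGraph V) (s : Finset V) : Prop :=
  ∀ u ∈ s, ∀ v ∈ s, ¬ G.Adj u v

section Graphs
variable [DecidableEq V]

/-- The complex `I_n(G[W])` of the induced subgraph `G[W]`, realized as the family of
subsets `U ⊆ W` such that `U` contains no independent set of `G` of size `n`. -/
noncomputable def indComplexOn (G : SimpleGraph V) (W : Finset V) (n : ℕ) :
    Finset (Finset V) :=
  @Finset.filter _ (fun U => ¬ ∃ I ⊆ U, I.card = n ∧ IsIndepSet G I)
    (Classical.decPred _) W.powerset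

variable [Fintype V]

/-- The complex `I_n(G)`: subsets of `V` containing no independent set of size `n`. -/
noncomputable def indComplex (G : SimpleGraph V) (n : ℕ) : Finset (Finset V) :=
  indComplexOn G Finset.univ n

/-- The open neighborhood of `v` as a finset. -/
noncomputable def nbrsFinset (G : SimpleGraph V) (v : V) : Finset V :=
  @Finset.filter _ (fun u => G.Adj v u) (Classical.decPred _) Finset.univ

/-- Filter of a finset by an arbitrary predicate (classical decidability). -/
noncomputable def cfilter (p : V → Prop) (s : Finset V) : Finset V :=
  @Finset.filter _ p (Classical.decPred _) s

end Graphs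

/-- `G` has maximum degree at most `Δ`. -/
def MaxDegLE (G : SimpleGraph V) (Δ : ℕ) : Prop :=
  ∀ v : V, (G.neighborSet v).ncard ≤ Δ

/-- `G` is claw-free: it has no induced subgraph isomorphic to `K_{1,3}`. -/
def ClawFree (G : SimpleGraph V) : Prop :=
  ¬ ∃ a b c d : V, b ≠ c ∧ b ≠ d ∧ c ≠ d ∧
    G.Adj a b ∧ G.Adj a c ∧ G.Adj a d ∧ ¬G.Adj b c ∧ ¬G.Adj b d ∧ ¬G.Adj c d

/-- `G` is chordal: it has no induced cycle of length at least 4. -/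
def IsChordal (G : SimpleGraph V) : Prop :=
  ∀ m : ℕ, 4 ≤ m → ¬ ∃ f : ZMod m → V, Function.Injective f ∧
    ∀ i j : ZMod m, G.Adj (f i) (f j) ↔ (j = i + 1 ∨ i = j + 1)

/-- `v` is a simplicial vertex of `G`: its closed neighborhood is a clique. -/
def IsSimplicialVertex (G : SimpleGraph V) (v : V) : Prop :=
  ∀ a b : V, G.Adj v a → G.Adj v b → a ≠ b → G.Adj a b

/-- The connected component of `v` in `G` is a path: its vertices can be enumerated
as `f 0, …, f m` with adjacency exactly between consecutive vertices. -/
def InPathComponent (G : SimpleGraph V) (v : V) : Prop :=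
  ∃ (m : ℕ) (f : Fin (m + 1) → V), Function.Injective f ∧
    (∀ w, G.Reachable v w ↔ ∃ i, f i = w) ∧
    (∀ i j : Fin (m + 1), G.Adj (f i) (f j) ↔ ((i : ℕ) + 1 = (j : ℕ) ∨ (j : ℕ) + 1 = (i : ℕ)))

/-- The collection `A 0, …, A (t-1)` of independent sets of `G` admits a rainbow
independent set of size `n`: there are indices `g 0 < ⋯ < g (n-1)` and distinct
vertices `a j ∈ A (g j)` forming an independent set of `G`. -/
def HasRainbowIndepSet [DecidableEq V] (G : SimpleGraph V) (n : ℕ) {t : ℕ} (A : Fin t → Finset V) : Prop :=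
  ∃ (g : Fin n → Fin t) (a : Fin n → V), StrictMono g ∧ Function.Injective a ∧
    (∀ j, a j ∈ A (g j)) ∧ IsIndepSet G (Finset.image a Finset.univ)

section FGraphs
variable [DecidableEq V] [Fintype V]

/-- `f_G(n)`: the minimum `t` such that every collection of `t` independent sets of
size `n` in `G` has a rainbow independent set of size `n`. -/
noncomputable def fRainbow (G : SimpleGraph V) (n : ℕ) : ℕ :=
  sInf {t | ∀ A : Fin t → Finset V,
    (∀ i, IsIndepSet G (A i) ∧ (A i).card = n) → HasRainbowIndepSet G n A}

/-- The independence number `α(G)`. -/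
noncomputable def indepNum (G : SimpleGraph V) : ℕ :=
  (@Finset.filter _ (fun s => IsIndepSet G s) (Classical.decPred _)
    (Finset.univ : Finset V).powerset).sup Finset.card

end FGraphs


/-! The faces of `lk(I_n(G), A)` are grouped into intervals `[η \ R(η), η ∪ R(η)]`, where a root
vertex is fixed on every cycle component and `R(η)` collects the roots of those cycle components
all of whose other vertices already lie in `η`. Adding the root of a cycle `O` to a set containing
`O` minus its root does not raise the independence number (a path on `|O| - 1` vertices has as
large an independent set as the cycle), so every interval lies in the link. A lower end `σ` contains
no whole cycle and avoids the path vertices of `A`, so `σ ∪ A` has an independent set of size at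
least `|σ ∪ A| / 2`, which gives `|σ| ≤ 2(n - 1) - |A|`. Removing the intervals one at a time,
in decreasing order of the size of `η` together with its attached cycles, is a sequence of
elementary collapses. -/

section Collapse
variable [DecidableEq V]

theorem collapsible_of_intervals {X : Finset (Finset V)} {d : ℕ} (σ τ : Finset V → Finset V)
    (ρ : Finset V → ℕ) (hσ : ∀ η ∈ X, σ η ⊆ η) (hτ : ∀ η ∈ X, η ⊆ τ η)
    (hinterval : ∀ η ∈ X, ∀ ζ, σ η ⊆ ζ → ζ ⊆ τ η → ζ ∈ X ∧ σ ζ = σ η ∧ τ ζ = τ η)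
    (hcard : ∀ η ∈ X, (σ η).card ≤ d)
    (hρ : ∀ η ∈ X, ∀ ζ ∈ X, σ η ⊆ ζ → ¬ζ ⊆ τ η → ρ η < ρ ζ) :
    Collapsible d X := by
  induction X using Finset.strongInduction with
  | _ X ih =>
  rcases X.eq_empty_or_nonempty with rfl | hX
  · exact .refl
  obtain ⟨η, hη, hmax⟩ := X.exists_max_image ρ hX
  have hστ : σ η ⊆ τ η := (hσ η hη).trans (hτ η hη)
  have hfree : IsFreeFace X (σ η) (τ η) :=
    ⟨(hinterval η hη _ subset_rfl hστ).1, (hinterval η hη _ hστ subset_rfl).1, hστ,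
      fun ζ hζ hσζ => by_contra fun h => (hmax ζ hζ).not_gt (hρ η hη ζ hζ hσζ h)⟩
  set Y := X.filter fun ζ => ¬(σ η ⊆ ζ ∧ ζ ⊆ τ η)
  have hYX : Y ⊂ X := Finset.filter_ssubset.2 ⟨η, hη, not_not.2 ⟨hσ η hη, hτ η hη⟩⟩
  have hmemY : ∀ {ζ}, ζ ∈ Y → ζ ∈ X := fun h => (Finset.mem_filter.1 h).1
  refine .head ⟨σ η, τ η, hfree, hcard η hη, rfl⟩ (ih Y hYX (fun ζ h => hσ ζ (hmemY h))
    (fun ζ h => hτ ζ (hmemY h)) ?_ (fun ζ h => hcard ζ (hmemY h))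
    (fun ζ h ξ h' => hρ ζ (hmemY h) ξ (hmemY h')))
  intro ζ hζ ξ h₁ h₂
  obtain ⟨hξX, hσξ, hτξ⟩ := hinterval ζ (hmemY hζ) ξ h₁ h₂
  refine ⟨Finset.mem_filter.2 ⟨hξX, fun hξη => ?_⟩, hσξ, hτξ⟩
  -- `ξ` would lie in two intervals, which are then equal, so `ζ` was removed as well
  obtain ⟨-, hση, hτη⟩ := hinterval η hη ξ hξη.1 hξη.2
  refine (Finset.mem_filter.1 hζ).2 ⟨?_, ?_⟩
  · exact (hση.symm.trans hσξ).subset.trans (hσ ζ (hmemY hζ))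
  · exact (hτ ζ (hmemY hζ)).trans (hτξ.symm.trans hτη).subset

theorem collapsible_of_forall_card_le {X : Finset (Finset V)} {d : ℕ}
    (h : ∀ η ∈ X, η.card ≤ d) : Collapsible d X :=
  collapsible_of_intervals id id Finset.card (fun _ _ => subset_rfl) (fun _ _ => subset_rfl)
    (fun _ hη _ h₁ h₂ => by simp [subset_antisymm h₂ h₁, hη]) h
    fun _ _ _ _ h₁ h₂ => Finset.card_lt_card ⟨h₁, h₂⟩

end Collapse

section IndepSets
variable {G : SimpleGraph V}

theorem IsIndepSet.mono {I J : Finset V} (h : I ⊆ J) (hJ : IsIndepSet G J) : IsIndepSet G I :=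
  fun u hu v hv => hJ u (h hu) v (h hv)

theorem IsIndepSet.union [DecidableEq V] {I J : Finset V} (hI : IsIndepSet G I)
    (hJ : IsIndepSet G J) (hIJ : ∀ u ∈ I, ∀ v ∈ J, ¬G.Adj u v) : IsIndepSet G (I ∪ J) := by
  intro u hu v hv huv
  rcases Finset.mem_union.1 hu with hu | hu <;> rcases Finset.mem_union.1 hv with hv | hv
  · exact hI u hu v hv huv
  · exact hIJ u hu v hv huv
  · exact hIJ v hv u hu huv.symm
  · exact hJ u hu v hv huv

/-- `α(G[U]) < n`. -/
def IndepNumLT (G : SimpleGraph V) (n : ℕ) (U : Finset V) : Prop :=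
  ∀ I ⊆ U, IsIndepSet G I → I.card < n

theorem IndepNumLT.mono {n : ℕ} {U U' : Finset V} (h : U ⊆ U') (hU' : IndepNumLT G n U') :
    IndepNumLT G n U :=
  fun I hI => hU' I (hI.trans h)

theorem mem_indComplex [DecidableEq V] [Fintype V] {n : ℕ} {U : Finset V} :
    U ∈ indComplex G n ↔ IndepNumLT G n U := by
  simp only [indComplex, indComplexOn, Finset.mem_filter, Finset.mem_powerset,
    Finset.subset_univ, true_and, not_exists, not_and]
  refine ⟨fun h I hIU hI => ?_, fun h I hIU hIn hI => (h I hIU hI).ne hIn⟩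
  by_contra! hnI
  obtain ⟨J, hJI, hJ⟩ := Finset.exists_subset_card_eq hnI
  exact h J (hJI.trans hIU) hJ (hI.mono hJI)

theorem mem_link_indComplex [DecidableEq V] [Fintype V] {n : ℕ} {A η : Finset V} :
    η ∈ link (indComplex G n) A ↔ Disjoint η A ∧ IndepNumLT G n (η ∪ A) := by
  simp only [link, Finset.mem_filter, mem_indComplex, ← Finset.disjoint_iff_inter_eq_empty]
  exact ⟨fun h => h.2, fun h => ⟨h.2.mono Finset.subset_union_left, h⟩⟩

theorem mem_link_indComplex_of_subset [DecidableEq V] [Fintype V] {n : ℕ} {A ζ η : Finset V}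
    (hζη : ζ ⊆ η) (hη : η ∈ link (indComplex G n) A) : ζ ∈ link (indComplex G n) A := by
  rw [mem_link_indComplex] at hη ⊢
  exact ⟨hη.1.mono_left hζη, hη.2.mono (Finset.union_subset_union_left hζη)⟩

end IndepSets

section MaxDegreeTwo
variable {G : SimpleGraph V}

def IsClosedTwoRegular (G : SimpleGraph V) (U : Finset V) : Prop :=
  ∀ u ∈ U, (G.neighborSet u).ncard = 2 ∧ ∀ w, G.Adj u w → w ∈ U

/-- In a graph of maximum degree `2` these are exactly the vertex sets of the cycle components. -/
def IsCycleComponent (G : SimpleGraph V) (O : Finset V) : Prop :=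
  Minimal (fun U => U.Nonempty ∧ IsClosedTwoRegular G U) O

theorem IsCycleComponent.disjoint [DecidableEq V] {O O' : Finset V} (h : IsCycleComponent G O)
    (h' : IsCycleComponent G O') (hne : O ≠ O') : Disjoint O O' := by
  by_contra hOO'
  have hclosed : IsClosedTwoRegular G (O ∩ O') := fun u hu =>
    ⟨(h.1.2 u (Finset.mem_inter.1 hu).1).1, fun w hw => Finset.mem_inter.2
      ⟨(h.1.2 u (Finset.mem_inter.1 hu).1).2 w hw, (h'.1.2 u (Finset.mem_inter.1 hu).2).2 w hw⟩⟩
  have hne' := Finset.not_disjoint_iff_nonempty_inter.1 hOO'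
  exact hne (subset_antisymm (h.2 ⟨hne', hclosed⟩ Finset.inter_subset_left |>.trans
    Finset.inter_subset_right) (h'.2 ⟨hne', hclosed⟩ Finset.inter_subset_right |>.trans
    Finset.inter_subset_left))

variable [Finite V]

theorem InPathComponent.notMem {a : V} (hpath : InPathComponent G a) {O : Finset V}
    (hO : IsClosedTwoRegular G O) : a ∉ O := by
  classical
  intro haO
  obtain ⟨m, f, hf, hreach, hadj⟩ := hpath
  obtain ⟨i₀, hi₀⟩ := (hreach a).1 .rfl
  obtain ⟨i, hiO, hmin⟩ := (Finset.univ.filter (f · ∈ O)).exists_min_image (fun i => (i : ℕ))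
    ⟨i₀, by simpa [hi₀] using haO⟩
  replace hiO : f i ∈ O := (Finset.mem_filter.1 hiO).2
  -- the first vertex of the path lying in `O` has all its neighbours in `O`, so only its successor
  have hnbr : ∀ w ∈ G.neighborSet (f i), ∃ j, f j = w ∧ (j : ℕ) = i + 1 := by
    intro w hw
    obtain ⟨j, rfl⟩ := (hreach w).1 (((hreach (f i)).2 ⟨i, rfl⟩).trans hw.reachable)
    have hj := hmin j (by simpa using (hO _ hiO).2 _ hw)
    have := (hadj i j).1 hw
    exact ⟨j, rfl, by omega⟩
  have hle : (G.neighborSet (f i)).ncard ≤ 1 := (Set.ncard_le_one).2 fun w hw w' hw' => by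
    obtain ⟨j, rfl, hj⟩ := hnbr w hw
    obtain ⟨j', rfl, hj'⟩ := hnbr w' hw'
    rw [Fin.ext (hj.trans hj'.symm)]
  have := (hO _ hiO).1
  omega

theorem card_filter_adj_le_ncard [DecidableRel G.Adj] (s : Finset V) (v : V) :
    (s.filter (G.Adj v)).card ≤ (G.neighborSet v).ncard := by
  rw [← Set.ncard_coe_finset]
  exact Set.ncard_le_ncard fun w hw => (Finset.mem_filter.1 hw).2

theorem ncard_le_card_filter_adj [DecidableRel G.Adj] {s : Finset V} {v : V}
    (hs : ∀ w, G.Adj v w → w ∈ s) :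
    (G.neighborSet v).ncard ≤ (s.filter (G.Adj v)).card := by
  rw [← Set.ncard_coe_finset]
  exact Set.ncard_le_ncard fun w hw => Finset.mem_filter.2 ⟨hs w hw, hw⟩

theorem two_mul_card_le_of_isIndepSet {O I : Finset V} (hO : IsClosedTwoRegular G O)
    (hIO : I ⊆ O) (hI : IsIndepSet G I) : 2 * I.card ≤ O.card := by
  classical
  -- each vertex of `I` sends two edges to `O \ I`, which receives at most two per vertex
  have hcount : I.card * 2 ≤ (O \ I).card * 2 := by
    refine Finset.card_mul_le_card_mul G.Adj (fun u hu => ?_) fun w hw => ?_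
    · rw [← (hO u (hIO hu)).1]
      exact ncard_le_card_filter_adj fun w hw => Finset.mem_sdiff.2
        ⟨(hO u (hIO hu)).2 w hw, fun hwI => hI u hu w hwI hw⟩
    · rw [← (hO w (Finset.mem_sdiff.1 hw).1).1]
      simpa only [Finset.bipartiteBelow, G.adj_comm] using card_filter_adj_le_ncard I w
  have := Finset.card_sdiff_add_card_eq_card hIO
  omega

theorem card_filter_adj_le_one [DecidableRel G.Adj] (hΔ : MaxDegLE G 2) {U : Finset V}
    {u : V} (hu : ¬((G.neighborSet u).ncard = 2 ∧ ∀ w, G.Adj u w → w ∈ U)) :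
    (U.filter (G.Adj u)).card ≤ 1 := by
  by_cases h2 : (G.neighborSet u).ncard = 2
  · obtain ⟨w, hw, hwU⟩ : ∃ w, G.Adj u w ∧ w ∉ U := by simpa [h2] using hu
    calc (U.filter (G.Adj u)).card = ((U.filter (G.Adj u) : Finset V) : Set V).ncard :=
          (Set.ncard_coe_finset _).symm
      _ ≤ (G.neighborSet u \ {w}).ncard := Set.ncard_le_ncard fun x hx =>
          ⟨(Finset.mem_filter.1 hx).2, fun hxw => hwU (hxw ▸ (Finset.mem_filter.1 hx).1)⟩
      _ = 1 := by rw [Set.ncard_sdiff_singleton_of_mem (show w ∈ G.neighborSet u from hw), h2]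
  · have := card_filter_adj_le_ncard (G := G) U u
    have := hΔ u
    omega

theorem exists_isIndepSet_card_le_two_mul (hΔ : MaxDegLE G 2) (U : Finset V)
    (hU : ∀ Q ⊆ U, Q.Nonempty → ¬IsClosedTwoRegular G Q) :
    ∃ I ⊆ U, IsIndepSet G I ∧ U.card ≤ 2 * I.card := by
  classical
  induction U using Finset.strongInduction with
  | _ U ih =>
  rcases U.eq_empty_or_nonempty with rfl | hne
  · exact ⟨∅, subset_rfl, fun u hu => absurd hu (Finset.notMem_empty u), by simp⟩
  -- some `u ∈ U` has at most one neighbour in `U`; delete it with that neighbour and recurse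
  obtain ⟨u, hu, hbad⟩ : ∃ u ∈ U, ¬((G.neighborSet u).ncard = 2 ∧ ∀ w, G.Adj u w → w ∈ U) := by
    simpa [IsClosedTwoRegular] using hU U subset_rfl hne
  set N := insert u (U.filter (G.Adj u))
  have hNU : N ⊆ U := Finset.insert_subset hu (Finset.filter_subset _ _)
  have hN : N.card ≤ 2 := (Finset.card_insert_le _ _).trans (by
    have := card_filter_adj_le_one hΔ hbad; omega)
  obtain ⟨I, hIU, hI, hcard⟩ :=
    ih (U \ N) (Finset.sdiff_ssubset hNU ⟨u, Finset.mem_insert_self _ _⟩) fun Q hQ =>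
      hU Q (hQ.trans Finset.sdiff_subset)
  have huI : u ∉ I := fun h => (Finset.mem_sdiff.1 (hIU h)).2 (Finset.mem_insert_self _ _)
  refine ⟨insert u I, Finset.insert_subset hu (hIU.trans Finset.sdiff_subset), ?_, ?_⟩
  · rw [Finset.insert_eq]
    refine (IsIndepSet.union (fun x hx y hy => by simp_all) hI) fun x hx y hy hxy => ?_
    rw [Finset.mem_singleton] at hx
    subst hx
    exact (Finset.mem_sdiff.1 (hIU hy)).2
      (Finset.mem_insert_of_mem (Finset.mem_filter.2 ⟨(Finset.mem_sdiff.1 (hIU hy)).1, hxy⟩))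
  · have := Finset.card_sdiff_add_card_eq_card hNU
    rw [Finset.card_insert_of_notMem huI]
    omega

theorem IndepNumLT.insert_of_erase_subset [DecidableEq V] (hΔ : MaxDegLE G 2) {n : ℕ}
    {O U : Finset V} {v : V} (hO : IsCycleComponent G O) (hv : v ∈ O) (hOU : O.erase v ⊆ U)
    (hU : IndepNumLT G n U) : IndepNumLT G n (insert v U) := by
  intro I hIU hI
  have hpath : ∀ Q ⊆ O.erase v, Q.Nonempty → ¬IsClosedTwoRegular G Q := fun Q hQ hQne hQc =>
    Finset.notMem_erase v O (hQ (hO.2 ⟨hQne, hQc⟩ (hQ.trans (Finset.erase_subset _ _)) hv))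
  obtain ⟨J, hJO, hJ, hJcard⟩ := exists_isIndepSet_card_le_two_mul hΔ _ hpath
  have hIO := two_mul_card_le_of_isIndepSet hO.1.2 Finset.inter_subset_right
    (hI.mono Finset.inter_subset_left)
  have hOcard := Finset.card_erase_add_one hv
  have hJO' : J ⊆ O := hJO.trans (Finset.erase_subset _ _)
  -- replace `I ∩ O` by the independent set `J` of the path `O - v`
  refine lt_of_le_of_lt ?_ (hU (I \ O ∪ J) (Finset.union_subset ?_ (hJO.trans hOU))
    (IsIndepSet.union (hI.mono Finset.sdiff_subset) hJ fun x hx y hy hxy =>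
      (Finset.mem_sdiff.1 hx).2 ((hO.1.2 y (hJO' hy)).2 x hxy.symm)))
  · rw [Finset.card_union_of_disjoint (Finset.disjoint_of_subset_right hJO' Finset.sdiff_disjoint)]
    have := Finset.card_sdiff_add_card_inter I O
    omega
  · intro x hx
    obtain ⟨hxI, hxO⟩ := Finset.mem_sdiff.1 hx
    exact (Finset.mem_insert.1 (hIU hxI)).resolve_left fun h => hxO (h ▸ hv)

end MaxDegreeTwo

theorem sdiff_eq_and_union_eq_of_sdiff_subset_of_subset_union [DecidableEq V]
    {s t u : Finset V} (h₁ : s \ u ⊆ t) (h₂ : t ⊆ s ∪ u) : t \ u = s \ u ∧ t ∪ u = s ∪ u := by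
  constructor <;> ext x <;> have := @h₁ x <;> have := @h₂ x <;>
    simp only [Finset.mem_sdiff, Finset.mem_union] at * <;> tauto

section Roots
variable [DecidableEq V] [Fintype V] (G : SimpleGraph V) (r : Finset V → V)

noncomputable def attachedCycles (η : Finset V) : Finset (Finset V) :=
  @Finset.filter _ (fun O => IsCycleComponent G O ∧ O.erase (r O) ⊆ η) (Classical.decPred _)
    Finset.univ

noncomputable def attachedRoots (η : Finset V) : Finset V := (attachedCycles G r η).image r

noncomputable def lowerFace (η : Finset V) : Finset V := η \ attachedRoots G r η

noncomputable def upperFace (η : Finset V) : Finset V := η ∪ attachedRoots G r η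

noncomputable def cycleHull (η : Finset V) : Finset V := η ∪ (attachedCycles G r η).biUnion id

variable {G r}

theorem mem_attachedCycles {η O : Finset V} :
    O ∈ attachedCycles G r η ↔ IsCycleComponent G O ∧ O.erase (r O) ⊆ η := by
  simp [attachedCycles]

variable (hr : ∀ O, IsCycleComponent G O → r O ∈ O)
include hr

theorem disjoint_erase_attachedRoots {η O : Finset V} (hO : IsCycleComponent G O) :
    Disjoint (O.erase (r O)) (attachedRoots G r η) := by
  refine Finset.disjoint_right.2 fun x hx hxO => ?_
  obtain ⟨O', hO', rfl⟩ := Finset.mem_image.1 hx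
  obtain ⟨hO'c, -⟩ := mem_attachedCycles.1 hO'
  rcases eq_or_ne O O' with rfl | hne
  · exact Finset.notMem_erase _ _ hxO
  · exact Finset.disjoint_left.1 (hO.disjoint hO'c hne) (Finset.mem_of_mem_erase hxO) (hr O' hO'c)

theorem erase_subset_lowerFace {η O : Finset V} (hO : O ∈ attachedCycles G r η) :
    O.erase (r O) ⊆ lowerFace G r η :=
  Finset.subset_sdiff.2 ⟨(mem_attachedCycles.1 hO).2,
    disjoint_erase_attachedRoots hr (mem_attachedCycles.1 hO).1⟩

theorem attachedCycles_mono {η ζ : Finset V} (h : lowerFace G r η ⊆ ζ) :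
    attachedCycles G r η ⊆ attachedCycles G r ζ := fun _ hO =>
  mem_attachedCycles.2 ⟨(mem_attachedCycles.1 hO).1, (erase_subset_lowerFace hr hO).trans h⟩

theorem attachedCycles_eq {η ζ : Finset V} (h₁ : lowerFace G r η ⊆ ζ) (h₂ : ζ ⊆ upperFace G r η) :
    attachedCycles G r ζ = attachedCycles G r η := by
  refine subset_antisymm (fun O hO => ?_) (attachedCycles_mono hr h₁)
  obtain ⟨hOc, hOζ⟩ := mem_attachedCycles.1 hO
  exact mem_attachedCycles.2 ⟨hOc, (disjoint_erase_attachedRoots hr hOc).left_le_of_le_sup_right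
    (hOζ.trans h₂)⟩

theorem lowerFace_eq_and_upperFace_eq {η ζ : Finset V} (h₁ : lowerFace G r η ⊆ ζ)
    (h₂ : ζ ⊆ upperFace G r η) :
    lowerFace G r ζ = lowerFace G r η ∧ upperFace G r ζ = upperFace G r η := by
  have hR : attachedRoots G r ζ = attachedRoots G r η := by
    rw [attachedRoots, attachedRoots, attachedCycles_eq hr h₁ h₂]
  rw [lowerFace, upperFace, lowerFace, upperFace, hR]
  exact sdiff_eq_and_union_eq_of_sdiff_subset_of_subset_union h₁ h₂

theorem cycleHull_ssubset {η ζ : Finset V} (h₁ : lowerFace G r η ⊆ ζ)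
    (h₂ : ¬ζ ⊆ upperFace G r η) : cycleHull G r η ⊂ cycleHull G r ζ := by
  have hsub : cycleHull G r η ⊆ cycleHull G r ζ := by
    refine Finset.union_subset (fun x hx => ?_) ((Finset.biUnion_subset_biUnion_of_subset_left _
      (attachedCycles_mono hr h₁)).trans Finset.subset_union_right)
    by_cases hxR : x ∈ attachedRoots G r η
    · obtain ⟨O, hO, rfl⟩ := Finset.mem_image.1 hxR
      exact Finset.mem_union_right _ (Finset.mem_biUnion.2
        ⟨O, attachedCycles_mono hr h₁ hO, hr O (mem_attachedCycles.1 hO).1⟩)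
    · exact Finset.mem_union_left _ (h₁ (Finset.mem_sdiff.2 ⟨hx, hxR⟩))
  obtain ⟨x, hxζ, hx⟩ := Finset.not_subset.1 h₂
  refine (Finset.ssubset_iff_of_subset hsub).2 ⟨x, Finset.mem_union_left _ hxζ, fun hxη => ?_⟩
  -- `x` is neither in `η` nor a root, so it would lie in `O.erase (r O) ⊆ η` for some `O`
  obtain ⟨hxη', hxR⟩ : x ∉ η ∧ x ∉ attachedRoots G r η := by simpa [upperFace] using hx
  obtain ⟨O, hO, hxO⟩ : ∃ O ∈ attachedCycles G r η, x ∈ O := by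
    simpa [cycleHull, hxη'] using hxη
  refine hxη' ((mem_attachedCycles.1 hO).2 (Finset.mem_erase.2 ⟨fun h => hxR ?_, hxO⟩))
  exact h ▸ Finset.mem_image_of_mem r hO

end Roots

section Link
variable [DecidableEq V] [Fintype V] {G : SimpleGraph V} {r : Finset V → V} {n : ℕ}

theorem IndepNumLT.union_image_of_erase_subset (hΔ : MaxDegLE G 2) {U : Finset V}
    (hU : IndepNumLT G n U) (T : Finset (Finset V))
    (hT : ∀ O ∈ T, IsCycleComponent G O ∧ r O ∈ O ∧ O.erase (r O) ⊆ U) :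
    IndepNumLT G n (U ∪ T.image r) := by
  induction T using Finset.induction_on with
  | empty => simpa using hU
  | insert O T _ ih =>
    rw [Finset.image_insert, Finset.union_insert]
    obtain ⟨hOc, hrO, hOU⟩ := hT O (Finset.mem_insert_self _ _)
    exact (ih fun O' h => hT O' (Finset.mem_insert_of_mem h)).insert_of_erase_subset hΔ hOc hrO
      (hOU.trans Finset.subset_union_left)

variable {A : Finset V} (hΔ : MaxDegLE G 2)
  (hr : ∀ O, IsCycleComponent G O → r O ∈ O) (hA : ∀ a ∈ A, InPathComponent G a)
include hΔ hr hA

theorem upperFace_mem_link {η : Finset V} (hη : η ∈ link (indComplex G n) A) :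
    upperFace G r η ∈ link (indComplex G n) A := by
  rw [mem_link_indComplex] at hη ⊢
  have hRA : Disjoint (attachedRoots G r η) A := Finset.disjoint_right.2 fun a ha hR => by
    obtain ⟨O, hO, rfl⟩ := Finset.mem_image.1 hR
    exact (hA _ ha).notMem (mem_attachedCycles.1 hO).1.1.2 (hr O (mem_attachedCycles.1 hO).1)
  refine ⟨Finset.disjoint_union_left.2 ⟨hη.1, hRA⟩, ?_⟩
  have := hη.2.union_image_of_erase_subset hΔ (attachedCycles G r η) fun O hO =>
    ⟨(mem_attachedCycles.1 hO).1, hr O (mem_attachedCycles.1 hO).1,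
      (mem_attachedCycles.1 hO).2.trans Finset.subset_union_left⟩
  rwa [upperFace, attachedRoots, Finset.union_right_comm]

theorem card_lowerFace_add_card_le {η : Finset V} (hη : η ∈ link (indComplex G n) A) :
    (lowerFace G r η).card + A.card ≤ 2 * (n - 1) := by
  classical
  rw [mem_link_indComplex] at hη
  -- a cycle inside `lowerFace η ∪ A` avoids the path vertices `A`, so its root was removed
  have hacyclic : ∀ Q ⊆ lowerFace G r η ∪ A, Q.Nonempty → ¬IsClosedTwoRegular G Q := by
    intro Q hQ hQne hQc
    obtain ⟨O, hOQ, hO⟩ := exists_minimal_le_of_wellFoundedLT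
      (fun U => U.Nonempty ∧ IsClosedTwoRegular G U) Q ⟨hQne, hQc⟩
    have hOσ : O ⊆ lowerFace G r η := fun x hx => (Finset.mem_union.1 (hQ (hOQ hx))).resolve_right
      fun hxA => (hA x hxA).notMem hO.1.2 hx
    have hOatt : O ∈ attachedCycles G r η := mem_attachedCycles.2
      ⟨hO, ((Finset.erase_subset _ _).trans hOσ).trans Finset.sdiff_subset⟩
    exact (Finset.mem_sdiff.1 (hOσ (hr O hO))).2 (Finset.mem_image_of_mem r hOatt)
  obtain ⟨I, hIU, hI, hcard⟩ := exists_isIndepSet_card_le_two_mul hΔ _ hacyclic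
  have hIn := hη.2 I (hIU.trans (Finset.union_subset_union_left Finset.sdiff_subset)) hI
  have hdisj : Disjoint (lowerFace G r η) A := hη.1.mono_left Finset.sdiff_subset
  rw [Finset.card_union_of_disjoint hdisj] at hcard
  omega

end Link

theorem collapseNum_link_indComplex_le_of_maxDeg_two_general {V : Type*} [DecidableEq V]
    [Fintype V] (G : SimpleGraph V) (hΔ : MaxDegLE G 2) (n : ℕ) (A : Finset V)
    (hApath : ∀ a ∈ A, InPathComponent G a) :
    collapseNum (link (indComplex G n) A) ≤ 2 * (n - 1) - A.card := by
  refine Nat.sInf_le ?_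
  rcases isEmpty_or_nonempty V with hV | hV
  · exact collapsible_of_forall_card_le fun η _ => by simp [Finset.eq_empty_of_isEmpty η]
  have hroot : ∀ O : Finset V, ∃ v, IsCycleComponent G O → v ∈ O := fun O => by
    by_cases hO : IsCycleComponent G O
    · exact hO.1.1.imp fun v hv _ => hv
    · exact ⟨Classical.arbitrary V, fun h => absurd h hO⟩
  choose r hr using hroot
  refine collapsible_of_intervals (lowerFace G r) (upperFace G r) (fun η => (cycleHull G r η).card)
    (fun _ _ => Finset.sdiff_subset) (fun _ _ => Finset.subset_union_left) ?_ (fun η hη => ?_)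
    fun _ _ _ _ h₁ h₂ => Finset.card_lt_card (cycleHull_ssubset hr h₁ h₂)
  · intro η hη ζ h₁ h₂
    exact ⟨mem_link_indComplex_of_subset h₂ (upperFace_mem_link hΔ hr hApath hη),
      lowerFace_eq_and_upperFace_eq hr h₁ h₂⟩
  · have := card_lowerFace_add_card_le hΔ hr hApath hη
    omega

/-- Let `G` have maximum degree at most `2` and let `A` be an
independent set of size at most `n - 1` contained in the union of the connected
components of `G` that are paths. Then `C(lk(I_n(G), A)) ≤ 2(n - 1) - |A|`. -/
theorem collapseNum_link_indComplex_le_of_maxDeg_two {V : Type*} [DecidableEq V]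
    [Fintype V] (G : SimpleGraph V) (hΔ : MaxDegLE G 2) (n : ℕ) (hn : 1 ≤ n)
    (A : Finset V) (hAind : IsIndepSet G A) (hAcard : A.card ≤ n - 1)
    (hApath : ∀ a ∈ A, InPathComponent G a) :
    collapseNum (link (indComplex G n) A) ≤ 2 * (n - 1) - A.card :=
  collapseNum_link_indComplex_le_of_maxDeg_two_general G hΔ n A hApath

end PaperKL
end

section
/- Let G be the disjoint union of two finite graphs G_1 and G_2, where the independence number of G_1 is t_1 and the independence number of G_2 is t_2. Then f_G(t_1 + t_2) ≤ max{ f_{G_1}(t_1), f_{G_2}(t_2) + t_1 }. -/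
/-!
An independent set of size `α(G₁) + α(G₂)` in `G₁ ⊕ G₂` consists of an independent set of size
`α(G₁)` in `G₁` and one of size `α(G₂)` in `G₂`. Given `max (f_{G₁}(t₁), f_{G₂}(t₂) + t₁)` such
sets, the `G₁`-parts of the first `f_{G₁}(t₁)` of them have a rainbow independent set, which uses
only `t₁` indices; the `G₂`-parts of at least `f_{G₂}(t₂)` of the remaining sets have one as well,
and since no edge joins `G₁` to `G₂` the two together form a rainbow independent set of `G₁ ⊕ G₂`.
-/

namespace PaperKL

open Finset

variable {V : Type*}

section Rainbow

variable {ι κ : Type*} {n : ℕ}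

/-- A rainbow independent set with distinct, not necessarily increasing, indices. -/
structure IsRainbow (G : SimpleGraph V) (A : ι → Finset V) (g : Fin n → ι) (a : Fin n → V) :
    Prop where
  injective_index : Function.Injective g
  injective : Function.Injective a
  mem : ∀ j, a j ∈ A (g j)
  not_adj : ∀ i j, ¬ G.Adj (a i) (a j)

theorem IsRainbow.comp_embedding {G : SimpleGraph V} {A : ι → Finset V} {g : Fin n → κ}
    {a : Fin n → V} (e : κ ↪ ι) (h : IsRainbow G (fun k => A (e k)) g a) :
    IsRainbow G A (e ∘ g) a :=
  ⟨e.injective.comp h.injective_index, h.injective, h.mem, h.not_adj⟩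

theorem hasRainbowIndepSet_iff [DecidableEq V] {G : SimpleGraph V} {t : ℕ}
    {A : Fin t → Finset V} :
    HasRainbowIndepSet G n A ↔ ∃ (g : Fin n → Fin t) (a : Fin n → V), IsRainbow G A g a := by
  constructor
  · rintro ⟨g, a, hg, ha, hmem, hind⟩
    exact ⟨g, a, hg.injective, ha, hmem, fun i j =>
      hind _ (mem_image_of_mem a (mem_univ i)) _ (mem_image_of_mem a (mem_univ j))⟩
  · rintro ⟨g, a, h⟩
    set σ := Tuple.sort g
    refine ⟨g ∘ σ, a ∘ σ, (Tuple.monotone_sort g).strictMono_of_injective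
      (h.injective_index.comp σ.injective), h.injective.comp σ.injective, fun j => h.mem _, ?_⟩
    intro u hu v hv
    obtain ⟨i, -, rfl⟩ := mem_image.mp hu
    obtain ⟨j, -, rfl⟩ := mem_image.mp hv
    exact h.not_adj _ _

theorem IsIndepSet.card_le_indepNum [Fintype V] {G : SimpleGraph V} {s : Finset V}
    (h : IsIndepSet G s) : s.card ≤ indepNum G := by
  unfold indepNum
  convert le_sup (f := Finset.card) (mem_filter.mpr ⟨mem_powerset.mpr (subset_univ s), h⟩)

/-- Pigeonhole: among `|Finset V| * n + 1` sets, more than `n` coincide, and they carry a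
rainbow copy of that set. -/
theorem setOf_rainbow_bound_nonempty [DecidableEq V] [Fintype V] (G : SimpleGraph V) (n : ℕ) :
    {t | ∀ A : Fin t → Finset V,
      (∀ i, IsIndepSet G (A i) ∧ (A i).card = n) → HasRainbowIndepSet G n A}.Nonempty := by
  refine ⟨Fintype.card (Finset V) * n + 1, fun A hA => hasRainbowIndepSet_iff.mpr ?_⟩
  obtain ⟨X, hX⟩ := Fintype.exists_lt_card_fiber_of_mul_lt_card A
    (by simp : Fintype.card (Finset V) * n < Fintype.card (Fin (Fintype.card (Finset V) * n + 1)))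
  set F := ({i | A i = X} : Finset _)
  obtain ⟨i₀, hi₀⟩ : F.Nonempty := card_pos.mp (by omega)
  have hAX : A i₀ = X := (mem_filter.mp hi₀).2
  obtain ⟨eF⟩ := Function.Embedding.nonempty_of_card_le (α := Fin n) (β := F) (by simp; omega)
  obtain ⟨eX⟩ := Function.Embedding.nonempty_of_card_le (α := Fin n) (β := X)
    (by simp [← hAX, (hA i₀).2])
  refine ⟨Subtype.val ∘ eF, Subtype.val ∘ eX, Subtype.val_injective.comp eF.injective,
    Subtype.val_injective.comp eX.injective, fun j => ?_, fun i j => ?_⟩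
  · rw [Function.comp_apply, (mem_filter.mp (eF j).2).2]
    exact (eX j).2
  · exact (hAX ▸ (hA i₀).1) _ (eX i).2 _ (eX j).2

theorem exists_isRainbow_of_fRainbow_le [DecidableEq V] [Fintype V] [Fintype ι]
    (G : SimpleGraph V) (A : ι → Finset V) (hA : ∀ i, IsIndepSet G (A i) ∧ (A i).card = n)
    (hcard : fRainbow G n ≤ Fintype.card ι) :
    ∃ (g : Fin n → ι) (a : Fin n → V), IsRainbow G A g a := by
  obtain ⟨e⟩ := Function.Embedding.nonempty_of_card_le (α := Fin (fRainbow G n)) (β := ι)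
    (by simpa using hcard)
  have hf : HasRainbowIndepSet G n (fun k => A (e k)) :=
    Nat.sInf_mem (setOf_rainbow_bound_nonempty G n) _ fun k => hA (e k)
  obtain ⟨g, a, h⟩ := hasRainbowIndepSet_iff.mp hf
  exact ⟨_, a, h.comp_embedding e⟩

end Rainbow

section Sum

variable {V₁ V₂ ι : Type*} {G₁ : SimpleGraph V₁} {G₂ : SimpleGraph V₂}

theorem IsIndepSet.toLeft {s : Finset (V₁ ⊕ V₂)} (h : IsIndepSet (G₁.sum G₂) s) :
    IsIndepSet G₁ s.toLeft :=
  fun _ hu _ hv => h _ (mem_toLeft.mp hu) _ (mem_toLeft.mp hv)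

theorem IsIndepSet.toRight {s : Finset (V₁ ⊕ V₂)} (h : IsIndepSet (G₁.sum G₂) s) :
    IsIndepSet G₂ s.toRight :=
  fun _ hu _ hv => h _ (mem_toRight.mp hu) _ (mem_toRight.mp hv)

theorem IsIndepSet.card_toLeft_toRight_eq_indepNum [Fintype V₁] [Fintype V₂]
    {s : Finset (V₁ ⊕ V₂)} (h : IsIndepSet (G₁.sum G₂) s)
    (hs : s.card = indepNum G₁ + indepNum G₂) :
    s.toLeft.card = indepNum G₁ ∧ s.toRight.card = indepNum G₂ := by
  have := card_toLeft_add_card_toRight (u := s)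
  have := h.toLeft.card_le_indepNum
  have := h.toRight.card_le_indepNum
  omega

theorem IsRainbow.sum {n₁ n₂ : ℕ} {A : ι → Finset (V₁ ⊕ V₂)} {g₁ : Fin n₁ → ι} {a₁ : Fin n₁ → V₁}
    {g₂ : Fin n₂ → ι} {a₂ : Fin n₂ → V₂}
    (h₁ : IsRainbow G₁ (fun i => (A i).toLeft) g₁ a₁)
    (h₂ : IsRainbow G₂ (fun i => (A i).toRight) g₂ a₂) (hdisj : ∀ i j, g₁ i ≠ g₂ j) :
    IsRainbow (G₁.sum G₂) A (Fin.append g₁ g₂) (Fin.append (Sum.inl ∘ a₁) (Sum.inr ∘ a₂)) where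
  injective_index := Fin.append_injective_iff.mpr ⟨h₁.injective_index, h₂.injective_index, hdisj⟩
  injective := Fin.append_injective_iff.mpr
    ⟨Sum.inl_injective.comp h₁.injective, Sum.inr_injective.comp h₂.injective,
      fun _ _ => Sum.inl_ne_inr⟩
  mem j := by
    refine Fin.addCases (fun j => ?_) (fun j => ?_) j
    · simpa using h₁.mem j
    · simpa using h₂.mem j
  not_adj i j := by
    refine Fin.addCases (fun i => ?_) (fun i => ?_) i <;>
      refine Fin.addCases (fun j => ?_) (fun j => ?_) j <;>
      simp [h₁.not_adj, h₂.not_adj]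

end Sum

/-- Let `G` be the disjoint union of `G₁` and `G₂`, with
independence numbers `t₁ = α(G₁)` and `t₂ = α(G₂)`. Then
`f_G(t₁ + t₂) ≤ max { f_{G₁}(t₁), f_{G₂}(t₂) + t₁ }`. -/
theorem fRainbow_sum_le {V₁ V₂ : Type*} [DecidableEq V₁] [Fintype V₁]
    [DecidableEq V₂] [Fintype V₂]
    (G₁ : SimpleGraph V₁) (G₂ : SimpleGraph V₂) (t₁ t₂ : ℕ)
    (h₁ : indepNum G₁ = t₁) (h₂ : indepNum G₂ = t₂) :
    fRainbow (G₁.sum G₂) (t₁ + t₂) ≤ max (fRainbow G₁ t₁) (fRainbow G₂ t₂ + t₁) := by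
  subst h₁ h₂
  refine Nat.sInf_le fun A hA => hasRainbowIndepSet_iff.mpr ?_
  have hsplit i := (hA i).1.card_toLeft_toRight_eq_indepNum (hA i).2
  obtain ⟨g₁, a₁, hr₁⟩ := exists_isRainbow_of_fRainbow_le G₁ (fun i => (A i).toLeft)
    (fun i => ⟨(hA i).1.toLeft, (hsplit i).1⟩) (by simp)
  set K := (univ.image g₁)ᶜ
  have hK : fRainbow G₂ (indepNum G₂) ≤ Fintype.card K := by
    rw [Fintype.card_coe, card_compl, card_image_of_injective _ hr₁.injective_index]
    simp only [card_univ, Fintype.card_fin]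
    omega
  obtain ⟨g₂, a₂, hr₂⟩ := exists_isRainbow_of_fRainbow_le G₂ (fun i : K => (A i).toRight)
    (fun i => ⟨(hA i).1.toRight, (hsplit i).2⟩) hK
  refine ⟨_, _, hr₁.sum (hr₂.comp_embedding (Function.Embedding.subtype _)) fun i j hij => ?_⟩
  exact mem_compl.mp (g₂ j).2 (mem_image.mpr ⟨i, mem_univ i, hij⟩)

end PaperKL
end
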